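/- Let d ≥ 1, N ≫ 1, s < (d−3)/2, and f_N(x) = N^{-s - d/2} Σ_{|k| ∼ N} e^{i k·x}, g_N(x) = N^{-(s−1/2) − d/2} Σ_{|k| ∼ N} cos(k·x) on 𝕋^d. Then ‖f_N‖_{H^s(𝕋^d)} ∼ 1, ‖g_N‖_{H^{s−1/2}(𝕋^d)} ∼ 1, and for 0 < t ≤ 1/(100N²), ‖∫₀^t e^{i(t−t')Δ}((e^{it'Δ} f_N)(cos(t'|∇|) g_N)) dt'‖_{H^s(𝕋^d)} ≥ c t N^{−s + (d+1)/2}. In particular, taking t = 1/(100N²), the second Picard iterate has H^s-norm ≳ N^{−s + (d−3)/2}, which tends to infinity as N → ∞ when s < (d−3)/2. -/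

import Mathlib

/-!
The data are constant on the dyadic shell `N ≤ |k| ≤ 2N`, which contains `≍ N^d` lattice
points, so their Sobolev norms are `≍ 1`. For `t ≤ 1/(100N²)` all phases in the Duhamel
integrand are at most `1/2`, so every nonzero term has real part at least half its size and
nothing cancels. For `k` in a cube of side `≍ N` at distance `≍ N` from the origin there are
`≳ N^d` decompositions `k = (k - k') + k'` with both frequencies in the shell, whence
`|F t k| ≳ t N^d N^{-s-d/2} N^{-s+1/2-d/2}`; summing over the `≳ N^d` such `k` gives the bound.
-/

open Finset

noncomputable section

variable {d : ℕ}

def latticeNorm (k : Fin d → ℤ) : ℝ := √(∑ i, (k i : ℝ) ^ 2)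

lemma latticeNorm_nonneg (k : Fin d → ℤ) : 0 ≤ latticeNorm k := Real.sqrt_nonneg _

lemma abs_le_latticeNorm (k : Fin d → ℤ) (i : Fin d) : |(k i : ℝ)| ≤ latticeNorm k :=
  Real.abs_le_sqrt <| single_le_sum (fun j _ => sq_nonneg (k j : ℝ)) (mem_univ i)

lemma latticeNorm_le_of_abs_le {k : Fin d → ℤ} {R : ℝ} (hR : 0 ≤ R)
    (h : ∀ i, |(k i : ℝ)| ≤ R) : latticeNorm k ≤ √d * R := by
  rw [latticeNorm, ← Real.sqrt_sq hR, ← Real.sqrt_mul (Nat.cast_nonneg d)]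
  refine Real.sqrt_le_sqrt ?_
  calc ∑ i, (k i : ℝ) ^ 2 ≤ ∑ _i : Fin d, R ^ 2 :=
        sum_le_sum fun i _ => sq_le_sq' (abs_le.1 (h i)).1 (abs_le.1 (h i)).2
    _ = d * R ^ 2 := by simp

lemma le_latticeNorm_of_le {k : Fin d → ℤ} {r : ℝ} (hr : 0 ≤ r) (h : ∀ i, r ≤ k i) :
    √d * r ≤ latticeNorm k := by
  rw [latticeNorm, ← Real.sqrt_sq hr, ← Real.sqrt_mul (Nat.cast_nonneg d)]
  refine Real.sqrt_le_sqrt ?_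
  calc (d * r ^ 2 : ℝ) = ∑ _i : Fin d, r ^ 2 := by simp
    _ ≤ ∑ i, (k i : ℝ) ^ 2 := sum_le_sum fun i _ => pow_le_pow_left₀ hr (h i) 2

def cube (a : Fin d → ℤ) (m : ℕ) : Finset (Fin d → ℤ) := Icc a (a + fun _ => (m : ℤ))

lemma mem_cube {a k : Fin d → ℤ} {m : ℕ} : k ∈ cube a m ↔ ∀ i, a i ≤ k i ∧ k i ≤ a i + m := by
  simp only [cube, mem_Icc, Pi.le_def, Pi.add_apply, forall_and]

lemma card_cube (a : Fin d → ℤ) (m : ℕ) : #(cube a m) = (m + 1) ^ d := by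
  have h (i : Fin d) : (a i + m + 1 - a i).toNat = m + 1 := by omega
  simp [cube, Pi.card_Icc, Int.card_Icc, h]

lemma latticeNorm_mem_Icc_of_mem_cube {x : ℕ} {m : ℕ} {k : Fin d → ℤ}
    (hk : k ∈ cube (fun _ => (x : ℤ)) m) :
    √d * x ≤ latticeNorm k ∧ latticeNorm k ≤ √d * (x + m) := by
  have hk' : ∀ i, (x : ℝ) ≤ k i ∧ (k i : ℝ) ≤ x + m := fun i => by
    exact_mod_cast mem_cube.1 hk i
  refine ⟨le_latticeNorm_of_le (Nat.cast_nonneg x) fun i => (hk' i).1,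
    latticeNorm_le_of_abs_le (by positivity) fun i => abs_le.2 ⟨?_, (hk' i).2⟩⟩
  linarith [(hk' i).1, (Nat.cast_nonneg x : (0 : ℝ) ≤ x), (Nat.cast_nonneg m : (0 : ℝ) ≤ m)]

def centredCube (R : ℝ) : Finset (Fin d → ℤ) := cube (fun _ => -(⌊R⌋₊ : ℤ)) (2 * ⌊R⌋₊)

lemma mem_centredCube_of_abs_le {k : Fin d → ℤ} {R : ℝ} (h : ∀ i, |(k i : ℝ)| ≤ R) :
    k ∈ centredCube R := by
  refine mem_cube.2 fun i => ?_
  have hR : 0 ≤ R := (abs_nonneg _).trans (h i)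
  have hfl : (⌊R⌋₊ : ℤ) = ⌊R⌋ := Int.natCast_floor_eq_floor hR
  have hle : k i ≤ ⌊R⌋ := Int.le_floor.2 (le_of_abs_le (h i))
  have hge : -k i ≤ ⌊R⌋ := Int.le_floor.2 (by push_cast; exact neg_le.1 (neg_le_of_abs_le (h i)))
  push_cast
  omega

def InShell (N : ℝ) (k : Fin d → ℤ) : Prop := N ≤ latticeNorm k ∧ latticeNorm k ≤ 2 * N

/-- The Fourier coefficients of `f_N` and `g_N` are of this form. -/
def IsShellProfile (N A : ℝ) (v : (Fin d → ℤ) → ℝ) : Prop :=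
  (∀ k, InShell N k → v k = A) ∧ ∀ k, ¬ InShell N k → v k = 0

lemma IsShellProfile.eq_zero_of_notMem_centredCube {N A : ℝ} {v : (Fin d → ℤ) → ℝ}
    (hv : IsShellProfile N A v) {k : Fin d → ℤ}
    (hk : k ∉ centredCube (2 * N)) : v k = 0 :=
  hv.2 k fun hs => hk <| mem_centredCube_of_abs_le fun i => (abs_le_latticeNorm k i).trans hs.2

lemma card_centredCube_le {R : ℝ} (hR : 1 ≤ R) :
    (#(centredCube R : Finset (Fin d → ℤ)) : ℝ) ≤ (3 * R) ^ d := by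
  rw [centredCube, card_cube]
  push_cast
  exact pow_le_pow_left₀ (by positivity) (by linarith [Nat.floor_le (zero_le_one.trans hR)]) d

lemma exists_cubes_in_shell {N : ℝ} (hd : 1 ≤ d) (hN : 2 * d ≤ N) :
    ∃ n m : ℕ, N / (4 * √d) ≤ m + 1 ∧
      (∀ k ∈ cube (fun _ : Fin d => (n : ℤ)) (2 * m), InShell N k) ∧
      ∀ k ∈ cube (fun _ : Fin d => ((2 * n + 2 * m : ℕ) : ℤ)) m,
        N ≤ latticeNorm k ∧ latticeNorm k ≤ 4 * N := by
  set r := √(d : ℝ)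
  have hd' : (1 : ℝ) ≤ d := by exact_mod_cast hd
  have hr1 : 1 ≤ r := Real.one_le_sqrt.2 hd'
  have hrd : r ≤ d := Real.sqrt_le_left (by positivity) |>.2 (by nlinarith)
  have hr0 : 0 < r := by linarith
  have hN0 : 0 ≤ N := by linarith
  set n := ⌈N / r⌉₊
  set m := ⌊N / (4 * r)⌋₊
  have hn : N ≤ r * n := by
    rw [← div_le_iff₀' hr0]; exact Nat.le_ceil _
  have hn' : r * n ≤ N + r := by
    have := (Nat.ceil_lt_add_one (div_nonneg hN0 hr0.le)).le
    calc r * n ≤ r * (N / r + 1) := by gcongr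
      _ = N + r := by field_simp
  have hm : r * m ≤ N / 4 := by
    have := Nat.floor_le (div_nonneg hN0 (by positivity : (0 : ℝ) ≤ 4 * r))
    calc r * m ≤ r * (N / (4 * r)) := by gcongr
      _ = N / 4 := by field_simp
  refine ⟨n, m, (Nat.lt_floor_add_one _).le, fun k hk => ?_, fun k hk => ?_⟩
  all_goals
    have := latticeNorm_mem_Icc_of_mem_cube hk
    push_cast at this
    constructor <;> nlinarith

lemma mem_cube_of_mem_cube_sub {n m : ℕ} {k k' : Fin d → ℤ}
    (hk : k ∈ cube (fun _ => ((2 * n + 2 * m : ℕ) : ℤ)) m)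
    (hk' : k' ∈ cube (k - fun _ => ((n + 2 * m : ℕ) : ℤ)) m) :
    k' ∈ cube (fun _ => (n : ℤ)) (2 * m) ∧ k - k' ∈ cube (fun _ => (n : ℤ)) (2 * m) := by
  simp only [mem_cube, Pi.sub_apply] at hk hk' ⊢
  push_cast at hk hk' ⊢
  exact ⟨fun i => by have := hk i; have := hk' i; omega,
    fun i => by have := hk i; have := hk' i; omega⟩

lemma rpow_mem_Icc_of_one_le_of_le {y c : ℝ} (σ : ℝ) (hy : 1 ≤ y) (hyc : y ≤ c) :
    c ^ (-|σ|) ≤ y ^ σ ∧ y ^ σ ≤ c ^ |σ| := by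
  have hy0 : 0 < y := by linarith
  constructor
  · calc c ^ (-|σ|) ≤ y ^ (-|σ|) :=
          Real.rpow_le_rpow_of_nonpos hy0 hyc (neg_nonpos.2 (abs_nonneg σ))
      _ ≤ y ^ σ := Real.rpow_le_rpow_of_exponent_le hy (neg_abs_le σ)
  · calc y ^ σ ≤ y ^ |σ| := Real.rpow_le_rpow_of_exponent_le hy (le_abs_self σ)
      _ ≤ c ^ |σ| := Real.rpow_le_rpow hy0.le hyc (abs_nonneg σ)

lemma one_add_sq_rpow_mem_Icc {N x c : ℝ} (σ : ℝ) (hN : 1 ≤ N) (hx : N ≤ x) (hxc : x ≤ c * N) :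
    (1 + c ^ 2) ^ (-|σ|) * (N ^ 2) ^ σ ≤ (1 + x ^ 2) ^ σ ∧
      (1 + x ^ 2) ^ σ ≤ (1 + c ^ 2) ^ |σ| * (N ^ 2) ^ σ := by
  have hN2 : 0 < N ^ 2 := by positivity
  have hsplit : (1 + x ^ 2) ^ σ = ((1 + x ^ 2) / N ^ 2) ^ σ * (N ^ 2) ^ σ := by
    rw [← Real.mul_rpow (by positivity) hN2.le, div_mul_cancel₀ _ hN2.ne']
  have hlow : 1 ≤ (1 + x ^ 2) / N ^ 2 := by
    rw [one_le_div hN2]; nlinarith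
  have hupp : (1 + x ^ 2) / N ^ 2 ≤ 1 + c ^ 2 := by
    rw [div_le_iff₀ hN2]; nlinarith
  obtain ⟨h1, h2⟩ := rpow_mem_Icc_of_one_le_of_le σ hlow hupp
  rw [hsplit]
  exact ⟨by gcongr, by gcongr⟩

lemma sq_rpow_mul_rpow_sq {N : ℝ} (hN : 0 < N) (σ : ℝ) (n : ℕ) :
    (N ^ 2) ^ σ * (N ^ (-σ - n / 2)) ^ 2 = (N ^ n)⁻¹ := by
  rw [← Real.rpow_natCast, ← Real.rpow_natCast, ← Real.rpow_natCast, ← Real.rpow_mul hN.le,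
    ← Real.rpow_mul hN.le, ← Real.rpow_add hN, ← Real.rpow_neg hN.le]
  ring_nf

def sobolevNorm (σ : ℝ) (v : (Fin d → ℤ) → ℂ) : ℝ :=
  √(∑' k, (1 + latticeNorm k ^ 2) ^ σ * ‖v k‖ ^ 2)

section ShellProfile

variable {N σ : ℝ} {v : (Fin d → ℤ) → ℝ}

lemma IsShellProfile.sobolev_term_le (hN : 1 ≤ N) (hv : IsShellProfile N (N ^ (-σ - d / 2)) v)
    (k : Fin d → ℤ) :
    (1 + latticeNorm k ^ 2) ^ σ * ‖(v k : ℂ)‖ ^ 2 ≤ 5 ^ |σ| * (N ^ d)⁻¹ := by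
  by_cases hk : InShell N k
  · have hw := (one_add_sq_rpow_mem_Icc (c := 2) σ hN hk.1 hk.2).2
    norm_num at hw
    rw [Complex.norm_real, Real.norm_eq_abs, sq_abs, hv.1 k hk,
      ← sq_rpow_mul_rpow_sq (by linarith) σ d, ← mul_assoc]
    gcongr
  · rw [hv.2 k hk, Complex.ofReal_zero, norm_zero, zero_pow two_ne_zero, mul_zero]
    positivity

lemma IsShellProfile.le_sobolev_term (hN : 1 ≤ N) (hv : IsShellProfile N (N ^ (-σ - d / 2)) v)
    {k : Fin d → ℤ} (hk : InShell N k) :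
    5 ^ (-|σ|) * (N ^ d)⁻¹ ≤ (1 + latticeNorm k ^ 2) ^ σ * ‖(v k : ℂ)‖ ^ 2 := by
  have hw := (one_add_sq_rpow_mem_Icc (c := 2) σ hN hk.1 hk.2).1
  norm_num at hw
  rw [Complex.norm_real, Real.norm_eq_abs, sq_abs, hv.1 k hk,
    ← sq_rpow_mul_rpow_sq (by linarith) σ d, ← mul_assoc]
  gcongr

lemma IsShellProfile.summable_sobolev {A : ℝ} (hv : IsShellProfile N A v) (σ : ℝ) :
    Summable fun k => (1 + latticeNorm k ^ 2) ^ σ * ‖(v k : ℂ)‖ ^ 2 :=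
  summable_of_ne_finset_zero (s := centredCube (2 * N)) fun k hk => by
    simp [hv.eq_zero_of_notMem_centredCube hk]

lemma IsShellProfile.tsum_sobolev_le (hN : 1 ≤ N) (hv : IsShellProfile N (N ^ (-σ - d / 2)) v) :
    ∑' k, (1 + latticeNorm k ^ 2) ^ σ * ‖(v k : ℂ)‖ ^ 2 ≤ 5 ^ |σ| * 6 ^ d := by
  set Q : Finset (Fin d → ℤ) := centredCube (2 * N)
  rw [tsum_eq_sum (s := Q) fun k hk => by simp [hv.eq_zero_of_notMem_centredCube hk]]
  have hQ : (#Q : ℝ) ≤ (6 * N) ^ d := by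
    have := card_centredCube_le (d := d) (R := 2 * N) (by linarith)
    rwa [← mul_assoc, show (3 : ℝ) * 2 = 6 by norm_num] at this
  calc ∑ k ∈ Q, (1 + latticeNorm k ^ 2) ^ σ * ‖(v k : ℂ)‖ ^ 2
      ≤ #Q * (5 ^ |σ| * (N ^ d)⁻¹) := by
        simpa using sum_le_card_nsmul Q _ _ fun k _ => hv.sobolev_term_le hN k
    _ ≤ (6 * N) ^ d * (5 ^ |σ| * (N ^ d)⁻¹) := by gcongr
    _ = 5 ^ |σ| * 6 ^ d := by
        have : N ^ d ≠ 0 := by positivity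
        field_simp
        ring

lemma IsShellProfile.le_tsum_sobolev (hd : 1 ≤ d) (hN : 2 * d ≤ N)
    (hv : IsShellProfile N (N ^ (-σ - d / 2)) v) :
    5 ^ (-|σ|) * ((4 * √d) ^ d)⁻¹ ≤ ∑' k, (1 + latticeNorm k ^ 2) ^ σ * ‖(v k : ℂ)‖ ^ 2 := by
  have hN1 : 1 ≤ N := by
    have : (1 : ℝ) ≤ d := by exact_mod_cast hd
    linarith
  obtain ⟨n, m, hm, hshell, -⟩ := exists_cubes_in_shell hd hN
  set Q := cube (fun _ : Fin d => (n : ℤ)) (2 * m)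
  have hQ : (N / (4 * √d)) ^ d ≤ #Q := by
    rw [card_cube]; push_cast
    exact pow_le_pow_left₀ (by positivity) (by linarith [(Nat.cast_nonneg m : (0 : ℝ) ≤ m)]) d
  calc 5 ^ (-|σ|) * ((4 * √d) ^ d)⁻¹ = (N / (4 * √d)) ^ d * (5 ^ (-|σ|) * (N ^ d)⁻¹) := by
        rw [div_pow]
        field_simp
    _ ≤ #Q * (5 ^ (-|σ|) * (N ^ d)⁻¹) := by gcongr
    _ ≤ ∑ k ∈ Q, (1 + latticeNorm k ^ 2) ^ σ * ‖(v k : ℂ)‖ ^ 2 := by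
        simpa using card_nsmul_le_sum Q _ _ fun k hk => hv.le_sobolev_term hN1 (hshell k hk)
    _ ≤ _ := (hv.summable_sobolev σ).sum_le_tsum Q fun k _ => by positivity

lemma IsShellProfile.sobolevNorm_mem_Icc {C : ℝ} (hd : 1 ≤ d) (hN : 2 * d ≤ N)
    (hv : IsShellProfile N (N ^ (-σ - d / 2)) v) (hC : 5 ^ |σ| * (6 * √d) ^ d ≤ C) :
    C⁻¹ ≤ sobolevNorm σ (fun k => (v k : ℂ)) ∧ sobolevNorm σ (fun k => (v k : ℂ)) ≤ C := by
  have hN1 : 1 ≤ N := by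
    have : (1 : ℝ) ≤ d := by exact_mod_cast hd
    linarith
  have hsd : 1 ≤ √(d : ℝ) := Real.one_le_sqrt.2 (by exact_mod_cast hd)
  have h5 : (1 : ℝ) ≤ 5 ^ |σ| := Real.one_le_rpow (by norm_num) (abs_nonneg σ)
  have h4 : (4 * √d) ^ d ≤ (6 * √(d : ℝ)) ^ d := by gcongr; norm_num
  have h6 : (6 : ℝ) ^ d ≤ (6 * √d) ^ d := by gcongr; nlinarith
  have h1 : (1 : ℝ) ≤ (4 * √d) ^ d := one_le_pow₀ (by linarith)
  have hC1 : 1 ≤ C := by nlinarith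
  constructor
  · refine (Real.le_sqrt (by positivity) (tsum_nonneg fun k => by positivity)).2 ?_
    refine le_trans ?_ (hv.le_tsum_sobolev hd hN)
    rw [Real.rpow_neg (by norm_num), ← mul_inv]
    calc C⁻¹ ^ 2 ≤ C⁻¹ := pow_le_of_le_one (by positivity) (inv_le_one_of_one_le₀ hC1) two_ne_zero
      _ ≤ _ := inv_anti₀ (by positivity) (by nlinarith)
  · refine (Real.sqrt_le_left (by linarith)).2 ?_
    calc _ ≤ 5 ^ |σ| * 6 ^ d := hv.tsum_sobolev_le hN1
      _ ≤ C := by nlinarith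
      _ ≤ C ^ 2 := by nlinarith

end ShellProfile

lemma seven_div_eight_le_cos {θ : ℝ} (h0 : 0 ≤ θ) (h : θ ≤ 1 / 2) : 7 / 8 ≤ Real.cos θ := by
  nlinarith [Real.one_sub_sq_div_two_le_cos (x := θ)]

lemma half_le_cos_mul_cos {N t t' x y z : ℝ} (hN : 1 ≤ N) (ht' : 0 ≤ t') (ht't : t' ≤ t)
    (ht : t * N ^ 2 ≤ 1 / 100) (hx : 0 ≤ x) (hxN : x ≤ 4 * N) (hy : 0 ≤ y) (hyN : y ≤ 2 * N)
    (hz : 0 ≤ z) (hzN : z ≤ 2 * N) :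
    1 / 2 ≤ Real.cos ((t - t') * x ^ 2 + t' * y ^ 2) * Real.cos (t' * z) := by
  have hx2 : x ^ 2 ≤ 16 * N ^ 2 := by nlinarith
  have hy2 : y ^ 2 ≤ 16 * N ^ 2 := by nlinarith
  have hθ : (t - t') * x ^ 2 + t' * y ^ 2 ≤ 1 / 2 := by nlinarith [sq_nonneg x, sq_nonneg y]
  have hφ : t' * z ≤ 1 / 2 := by
    have h1 : t' * z ≤ t * (2 * N) := mul_le_mul ht't hzN hz (by linarith)
    have h2 : t * N ≤ t * N ^ 2 := mul_le_mul_of_nonneg_left (by nlinarith) (by linarith)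
    linarith
  have h1 := seven_div_eight_le_cos (by nlinarith [sq_nonneg x, sq_nonneg y]) hθ
  have h2 := seven_div_eight_le_cos (by positivity) hφ
  nlinarith

lemma re_exp_mul_exp_mul_ofReal (x y u w : ℝ) :
    (Complex.exp (-Complex.I * x) * (Complex.exp (-Complex.I * y) * u * w)).re =
      Real.cos (x + y) * (u * w) := by
  have : Complex.exp (-Complex.I * x) * (Complex.exp (-Complex.I * y) * u * w) =
      ((u * w : ℝ) : ℂ) * Complex.exp ((-(x + y) : ℝ) * Complex.I) := by
    push_cast
    rw [show -(((x : ℂ) + y)) * Complex.I = -Complex.I * x + -Complex.I * y by ring,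
      Complex.exp_add]
    ring
  rw [this, Complex.re_ofReal_mul, Complex.exp_ofReal_mul_I_re, Real.cos_neg, mul_comm]

lemma mul_le_norm_intervalIntegral_of_le_re {g : ℝ → ℂ} {t c : ℝ} (hg : Continuous g)
    (ht : 0 ≤ t) (h : ∀ t' ∈ Set.Icc 0 t, c ≤ (g t').re) : t * c ≤ ‖∫ t' in (0 : ℝ)..t, g t'‖ :=
  calc t * c = ∫ _ in (0 : ℝ)..t, c := by simp
    _ ≤ ∫ t' in (0 : ℝ)..t, (g t').re :=
        intervalIntegral.integral_mono_on ht intervalIntegrable_const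
          ((Complex.continuous_re.comp hg).intervalIntegrable _ _) h
    _ = (∫ t' in (0 : ℝ)..t, g t').re :=
        Complex.reCLM.intervalIntegral_comp_comm (hg.intervalIntegrable _ _)
    _ ≤ _ := Complex.re_le_norm _

def picardSummand (a b : (Fin d → ℤ) → ℝ) (t' : ℝ) (k k' : Fin d → ℤ) : ℂ :=
  Complex.exp (-Complex.I * ((t' * latticeNorm (k - k') ^ 2 : ℝ) : ℂ)) * ((a (k - k') : ℝ) : ℂ) *
    ((Real.cos (t' * latticeNorm k') * b k' : ℝ) : ℂ)

/-- The `k`-th Fourier coefficient of `∫₀ᵗ e^{i(t−t')Δ}((e^{it'Δ}f)(cos(t'|∇|)g)) dt'`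
when `f̂ = a` and `ĝ = b`. -/
def picardIterate (a b : (Fin d → ℤ) → ℝ) (t : ℝ) (k : Fin d → ℤ) : ℂ :=
  ∫ t' in (0 : ℝ)..t, Complex.exp (-Complex.I * (((t - t') * latticeNorm k ^ 2 : ℝ) : ℂ)) *
    ∑' k', picardSummand a b t' k k'

section Picard

variable {N A B t : ℝ} {a b : (Fin d → ℤ) → ℝ}

lemma re_exp_mul_picardSummand (x t' : ℝ) (k k' : Fin d → ℤ) :
    (Complex.exp (-Complex.I * x) * picardSummand a b t' k k').re =
      Real.cos (x + t' * latticeNorm (k - k') ^ 2) *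
        (a (k - k') * (Real.cos (t' * latticeNorm k') * b k')) := by
  rw [picardSummand, ← re_exp_mul_exp_mul_ofReal]

lemma picardSummand_eq_zero_of_not_inShell (ha : IsShellProfile N A a)
    (hb : IsShellProfile N B b) {t' : ℝ} {k k' : Fin d → ℤ}
    (h : ¬ (InShell N k' ∧ InShell N (k - k'))) : picardSummand a b t' k k' = 0 := by
  rcases not_and_or.1 h with hk' | hkk'
  · simp [picardSummand, hb.2 k' hk']
  · simp [picardSummand, ha.2 _ hkk']

lemma picardIterate_eq_integral_sum (ha : IsShellProfile N A a) (hb : IsShellProfile N B b)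
    (t : ℝ) (k : Fin d → ℤ) :
    picardIterate a b t k = ∫ t' in (0 : ℝ)..t,
      Complex.exp (-Complex.I * (((t - t') * latticeNorm k ^ 2 : ℝ) : ℂ)) *
        ∑ k' ∈ centredCube (2 * N), picardSummand a b t' k k' := by
  refine intervalIntegral.integral_congr fun t' _ => ?_
  rw [tsum_eq_sum fun k' hk' => picardSummand_eq_zero_of_not_inShell ha hb fun h =>
    hk' (mem_centredCube_of_abs_le fun i => (abs_le_latticeNorm k' i).trans h.1.2)]

lemma picardIterate_eq_zero_of_notMem (ha : IsShellProfile N A a) (hb : IsShellProfile N B b)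
    {k : Fin d → ℤ} (hk : k ∉ centredCube (4 * N)) : picardIterate a b t k = 0 := by
  have hsummand (t' : ℝ) (k' : Fin d → ℤ) : picardSummand a b t' k k' = 0 := by
    refine picardSummand_eq_zero_of_not_inShell ha hb fun ⟨hk', hkk'⟩ => hk ?_
    refine mem_centredCube_of_abs_le fun i => ?_
    have h1 := (abs_le_latticeNorm (k - k') i).trans hkk'.2
    have h2 := (abs_le_latticeNorm k' i).trans hk'.2
    rw [Pi.sub_apply, Int.cast_sub] at h1
    linarith [abs_sub_abs_le_abs_sub (k i : ℝ) (k' i)]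
  simp [picardIterate, hsummand]

lemma half_mul_le_picardTerm (ha : IsShellProfile N A a) (hb : IsShellProfile N B b)
    (hA : 0 ≤ A) (hB : 0 ≤ B) (hN : 1 ≤ N) (htN : t * N ^ 2 ≤ 1 / 100) {t' : ℝ}
    (ht' : t' ∈ Set.Icc 0 t) {k k' : Fin d → ℤ} (hk : latticeNorm k ≤ 4 * N)
    (hk' : InShell N k') (hkk' : InShell N (k - k')) :
    A * B / 2 ≤ Real.cos ((t - t') * latticeNorm k ^ 2 + t' * latticeNorm (k - k') ^ 2) *
      (a (k - k') * (Real.cos (t' * latticeNorm k') * b k')) := by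
  have h := half_le_cos_mul_cos hN ht'.1 ht'.2 htN (latticeNorm_nonneg k) hk
    (latticeNorm_nonneg _) hkk'.2 (latticeNorm_nonneg _) hk'.2
  rw [ha.1 _ hkk', hb.1 _ hk']
  nlinarith [mul_nonneg hA hB]

lemma picardTerm_nonneg (ha : IsShellProfile N A a) (hb : IsShellProfile N B b)
    (hA : 0 ≤ A) (hB : 0 ≤ B) (hN : 1 ≤ N) (htN : t * N ^ 2 ≤ 1 / 100) {t' : ℝ}
    (ht' : t' ∈ Set.Icc 0 t) {k : Fin d → ℤ} (hk : latticeNorm k ≤ 4 * N) (k' : Fin d → ℤ) :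
    0 ≤ Real.cos ((t - t') * latticeNorm k ^ 2 + t' * latticeNorm (k - k') ^ 2) *
      (a (k - k') * (Real.cos (t' * latticeNorm k') * b k')) := by
  by_cases hk' : InShell N k'
  · by_cases hkk' : InShell N (k - k')
    · exact (by positivity : 0 ≤ A * B / 2).trans
        (half_mul_le_picardTerm ha hb hA hB hN htN ht' hk hk' hkk')
    · simp [ha.2 _ hkk']
  · simp [hb.2 _ hk']

lemma card_mul_le_norm_picardIterate (ha : IsShellProfile N A a) (hb : IsShellProfile N B b)
    (hA : 0 ≤ A) (hB : 0 ≤ B) (hN : 1 ≤ N) (ht : 0 ≤ t) (htN : t * N ^ 2 ≤ 1 / 100)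
    {k : Fin d → ℤ} (hk : latticeNorm k ≤ 4 * N) {T : Finset (Fin d → ℤ)}
    (hT : ∀ k' ∈ T, InShell N k' ∧ InShell N (k - k')) :
    t * (#T * (A * B / 2)) ≤ ‖picardIterate a b t k‖ := by
  rw [picardIterate_eq_integral_sum ha hb]
  refine mul_le_norm_intervalIntegral_of_le_re (by unfold picardSummand; fun_prop) ht
    fun t' ht' => ?_
  have hsub : T ⊆ centredCube (2 * N) := fun k' hk' =>
    mem_centredCube_of_abs_le fun i => (abs_le_latticeNorm k' i).trans (hT k' hk').1.2
  rw [Finset.mul_sum, Complex.re_sum]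
  simp only [re_exp_mul_picardSummand]
  calc #T * (A * B / 2)
      ≤ ∑ k' ∈ T, Real.cos ((t - t') * latticeNorm k ^ 2 + t' * latticeNorm (k - k') ^ 2) *
          (a (k - k') * (Real.cos (t' * latticeNorm k') * b k')) := by
        simpa using card_nsmul_le_sum T _ _ fun k' hk' =>
          half_mul_le_picardTerm ha hb hA hB hN htN ht' hk (hT k' hk').1 (hT k' hk').2
    _ ≤ _ := sum_le_sum_of_subset_of_nonneg hsub fun k' _ _ =>
          picardTerm_nonneg ha hb hA hB hN htN ht' hk k'

lemma summable_sobolev_picardIterate (ha : IsShellProfile N A a) (hb : IsShellProfile N B b)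
    (s t : ℝ) : Summable fun k => (1 + latticeNorm k ^ 2) ^ s * ‖picardIterate a b t k‖ ^ 2 :=
  summable_of_ne_finset_zero (s := centredCube (4 * N)) fun k hk => by
    simp [picardIterate_eq_zero_of_notMem ha hb hk]

lemma le_tsum_sobolev_picardIterate (hd : 1 ≤ d) (hN : 2 * d ≤ N)
    (ha : IsShellProfile N A a) (hb : IsShellProfile N B b) (hA : 0 ≤ A) (hB : 0 ≤ B)
    (ht : 0 ≤ t) (htN : t * N ^ 2 ≤ 1 / 100) (s : ℝ) :
    17 ^ (-|s|) / 4 * (N / (4 * √d)) ^ (3 * d) * (N ^ 2) ^ s * (t * A * B) ^ 2 ≤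
      ∑' k, (1 + latticeNorm k ^ 2) ^ s * ‖picardIterate a b t k‖ ^ 2 := by
  have hN1 : 1 ≤ N := by
    have : (1 : ℝ) ≤ d := by exact_mod_cast hd
    linarith
  obtain ⟨n, m, hm, hshell, hK⟩ := exists_cubes_in_shell hd hN
  set K := cube (fun _ : Fin d => ((2 * n + 2 * m : ℕ) : ℤ)) m
  set E := t * ((m + 1 : ℝ) ^ d * (A * B / 2))
  have hterm (k : Fin d → ℤ) (hk : k ∈ K) :
      17 ^ (-|s|) * (N ^ 2) ^ s * E ^ 2 ≤
        (1 + latticeNorm k ^ 2) ^ s * ‖picardIterate a b t k‖ ^ 2 := by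
    have hw := (one_add_sq_rpow_mem_Icc (c := 4) s hN1 (hK k hk).1 (hK k hk).2).1
    norm_num at hw
    have hF : E ≤ ‖picardIterate a b t k‖ := by
      have := card_mul_le_norm_picardIterate ha hb hA hB hN1 ht htN (hK k hk).2
        (T := cube (k - fun _ => ((n + 2 * m : ℕ) : ℤ)) m) fun k' hk' =>
          (mem_cube_of_mem_cube_sub hk hk').imp (hshell _) (hshell _)
      rwa [card_cube, Nat.cast_pow, Nat.cast_succ] at this
    gcongr
  calc 17 ^ (-|s|) / 4 * (N / (4 * √d)) ^ (3 * d) * (N ^ 2) ^ s * (t * A * B) ^ 2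
      ≤ 17 ^ (-|s|) / 4 * (m + 1 : ℝ) ^ (3 * d) * (N ^ 2) ^ s * (t * A * B) ^ 2 := by
        gcongr
    _ = #K * (17 ^ (-|s|) * (N ^ 2) ^ s * E ^ 2) := by
        rw [card_cube]; push_cast; ring
    _ ≤ ∑ k ∈ K, (1 + latticeNorm k ^ 2) ^ s * ‖picardIterate a b t k‖ ^ 2 := by
        simpa using card_nsmul_le_sum K _ _ hterm
    _ ≤ _ := (summable_sobolev_picardIterate ha hb s t).sum_le_tsum K fun k _ => by positivity

end Picard

lemma rpow_picard_exponent_eq {N : ℝ} (hN : 0 < N) (s : ℝ) (d : ℕ) :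
    N ^ (3 * d) * (N ^ 2) ^ s * (N ^ (-s - d / 2) * N ^ (-(s - 1 / 2) - d / 2)) ^ 2 =
      (N ^ (-s + (d + 1) / 2)) ^ 2 := by
  simp only [← Real.rpow_natCast, ← Real.rpow_mul hN.le, ← Real.rpow_add hN]
  congr 1
  push_cast
  ring

end

theorem stmt_7_general (d : ℕ) (hd : 1 ≤ d) (s : ℝ) :
    ∃ C : ℝ, 1 ≤ C ∧ ∃ c : ℝ, 0 < c ∧ ∃ N₀ : ℝ, 1 ≤ N₀ ∧ ∀ N : ℝ, N₀ ≤ N →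
      let nrm : (Fin d → ℤ) → ℝ := fun k => Real.sqrt (∑ i, ((k i : ℝ)) ^ 2)
      let shell : (Fin d → ℤ) → Prop := fun k => N ≤ nrm k ∧ nrm k ≤ 2 * N
      let a : (Fin d → ℤ) → ℝ := fun k =>
        if shell k then N ^ (-s - (d : ℝ) / 2) else 0
      let b : (Fin d → ℤ) → ℝ := fun k =>
        if shell k then N ^ (-(s - 1/2) - (d : ℝ) / 2) else 0
      let Hnorm : ℝ → ((Fin d → ℤ) → ℂ) → ℝ := fun σ v =>
        Real.sqrt (∑' k : Fin d → ℤ, (1 + (nrm k) ^ 2) ^ σ * ‖v k‖ ^ 2)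
      let F : ℝ → (Fin d → ℤ) → ℂ := fun t k =>
        ∫ t' in (0:ℝ)..t,
          Complex.exp (-Complex.I * (((t - t') * (nrm k) ^ 2 : ℝ) : ℂ)) *
            ∑' k' : Fin d → ℤ,
              Complex.exp (-Complex.I * ((t' * (nrm (k - k')) ^ 2 : ℝ) : ℂ)) *
                ((a (k - k') : ℝ) : ℂ) *
                ((Real.cos (t' * nrm k') * b k' : ℝ) : ℂ)
      (C⁻¹ ≤ Hnorm s (fun k => ((a k : ℝ) : ℂ)) ∧
        Hnorm s (fun k => ((a k : ℝ) : ℂ)) ≤ C) ∧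
      (C⁻¹ ≤ Hnorm (s - 1/2) (fun k => ((b k : ℝ) : ℂ)) ∧
        Hnorm (s - 1/2) (fun k => ((b k : ℝ) : ℂ)) ≤ C) ∧
      ∀ t : ℝ, 0 < t → t ≤ 1 / (100 * N ^ 2) →
        c * t * N ^ (-s + ((d : ℝ) + 1) / 2) ≤ Hnorm s (F t) := by
  have hd' : (1 : ℝ) ≤ d := by exact_mod_cast hd
  have hsd : 1 ≤ √(d : ℝ) := Real.one_le_sqrt.2 hd'
  set κ : ℝ := 17 ^ (-|s|) / 4 / (4 * √d) ^ (3 * d)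
  have h5 (σ : ℝ) (hσ : |σ| ≤ |s| + |s - 1 / 2|) :
      (5 : ℝ) ^ |σ| * (6 * √d) ^ d ≤ 5 ^ (|s| + |s - 1 / 2|) * (6 * √d) ^ d := by
    gcongr; norm_num
  refine ⟨5 ^ (|s| + |s - 1 / 2|) * (6 * √d) ^ d,
    one_le_mul_of_one_le_of_one_le (Real.one_le_rpow (by norm_num) (by positivity))
      (one_le_pow₀ (by linarith)),
    √κ, Real.sqrt_pos.2 (by positivity), 2 * d, by linarith, fun N hN => ?_⟩
  intro nrm shell a b Hnorm F
  have ha : IsShellProfile N (N ^ (-s - d / 2)) a := ⟨fun _ h => if_pos h, fun _ h => if_neg h⟩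
  have hb : IsShellProfile N (N ^ (-(s - 1 / 2) - d / 2)) b :=
    ⟨fun _ h => if_pos h, fun _ h => if_neg h⟩
  have hN0 : 0 < N := by linarith
  refine ⟨ha.sobolevNorm_mem_Icc hd hN (h5 s (by simp)),
    hb.sobolevNorm_mem_Icc hd hN (h5 _ (by simp)), fun t ht htN => ?_⟩
  have htN' : t * N ^ 2 ≤ 1 / 100 := by
    rw [le_div_iff₀ (by positivity)] at htN; linarith
  refine (Real.le_sqrt (by positivity) (tsum_nonneg fun k => by positivity)).2 ?_
  refine le_trans (le_of_eq ?_) (le_tsum_sobolev_picardIterate hd hN ha hb (by positivity)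
    (by positivity) ht.le htN' s)
  rw [mul_pow, mul_pow, Real.sq_sqrt (by positivity), ← rpow_picard_exponent_eq hN0, div_pow]
  simp only [κ]
  field_simp

/-- Counterexample to `C²`-smoothness of the Zakharov flow map below scaling: for
`s < (d−3)/2`, the data `f_N, g_N` with Fourier coefficients
`f̂_N(k) = N^{-s-d/2} 𝟙_{N ≤ |k| ≤ 2N}`, `ĝ_N(k) = N^{-(s-1/2)-d/2} 𝟙_{N ≤ |k| ≤ 2N}`
have `H^s`- resp. `H^{s-1/2}`-norms comparable to 1, while the second Picard
iterate `∫₀^t e^{i(t−t')Δ}((e^{it'Δ}f_N)(cos(t'|∇|)g_N)) dt'` (written in Fourier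
variables) has `H^s`-norm at least `c t N^{−s+(d+1)/2}` for `0 < t ≤ 1/(100N²)`. -/
theorem stmt_7 (d : ℕ) (hd : 1 ≤ d) (s : ℝ) (hs : s < ((d : ℝ) - 3) / 2) :
    ∃ C : ℝ, 1 ≤ C ∧ ∃ c : ℝ, 0 < c ∧ ∃ N₀ : ℝ, 1 ≤ N₀ ∧ ∀ N : ℝ, N₀ ≤ N →
      let nrm : (Fin d → ℤ) → ℝ := fun k => Real.sqrt (∑ i, ((k i : ℝ)) ^ 2)
      let shell : (Fin d → ℤ) → Prop := fun k => N ≤ nrm k ∧ nrm k ≤ 2 * N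
      let a : (Fin d → ℤ) → ℝ := fun k =>
        if shell k then N ^ (-s - (d : ℝ) / 2) else 0
      let b : (Fin d → ℤ) → ℝ := fun k =>
        if shell k then N ^ (-(s - 1/2) - (d : ℝ) / 2) else 0
      let Hnorm : ℝ → ((Fin d → ℤ) → ℂ) → ℝ := fun σ v =>
        Real.sqrt (∑' k : Fin d → ℤ, (1 + (nrm k) ^ 2) ^ σ * ‖v k‖ ^ 2)
      let F : ℝ → (Fin d → ℤ) → ℂ := fun t k =>
        ∫ t' in (0:ℝ)..t,
          Complex.exp (-Complex.I * (((t - t') * (nrm k) ^ 2 : ℝ) : ℂ)) *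
            ∑' k' : Fin d → ℤ,
              Complex.exp (-Complex.I * ((t' * (nrm (k - k')) ^ 2 : ℝ) : ℂ)) *
                ((a (k - k') : ℝ) : ℂ) *
                ((Real.cos (t' * nrm k') * b k' : ℝ) : ℂ)
      (C⁻¹ ≤ Hnorm s (fun k => ((a k : ℝ) : ℂ)) ∧
        Hnorm s (fun k => ((a k : ℝ) : ℂ)) ≤ C) ∧
      (C⁻¹ ≤ Hnorm (s - 1/2) (fun k => ((b k : ℝ) : ℂ)) ∧
        Hnorm (s - 1/2) (fun k => ((b k : ℝ) : ℂ)) ≤ C) ∧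
      ∀ t : ℝ, 0 < t → t ≤ 1 / (100 * N ^ 2) →
        c * t * N ^ (-s + ((d : ℝ) + 1) / 2) ≤ Hnorm s (F t) :=
  stmt_7_general d hd s
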